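/- arXiv:1910.07693 — 3 statements merged into one kernel-verified Lean document; each statement's English description precedes it below -/
import Mathlib

section
/- Assume conditions (α) and (β) hold. Let S be an (A,H,C,G_y)-input containing subspace with V_m ∩ S_M ⊆ S ⊆ S_M, and let R̂ denote the smallest self bounded subspace of the quadruple (A,[B H S],E,[D_z G_z 0]) whose input space is ℝ^m × ℝ^q × S, input map (u,w,v) ↦ Bu + Hw + v and feedthrough (u,w,v) ↦ D_z u + G_z w, assumed to exist. Then S*(A,H,C,G_y) ⊆ V*(A,B,E,D_z) if and only if S + V_m = R̂. -/
noncomputable section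

open Matrix Submodule

section GeneralDefs

variable {X U Y : Type*} [AddCommGroup X] [Module ℝ X] [AddCommGroup U] [Module ℝ U]
  [AddCommGroup Y] [Module ℝ Y]

/-- `V` is an `(A,B,C,D)`-output nulling subspace. -/
def IsOutputNulling (A : X →ₗ[ℝ] X) (B : U →ₗ[ℝ] X) (C : X →ₗ[ℝ] Y) (D : U →ₗ[ℝ] Y)
    (V : Submodule ℝ X) : Prop :=
  ∀ v ∈ V, ∃ u : U, A v + B u ∈ V ∧ C v + D u = 0

/-- `S` is an `(A,B,C,D)`-input containing subspace. -/
def IsInputContaining (A : X →ₗ[ℝ] X) (B : U →ₗ[ℝ] X) (C : X →ₗ[ℝ] Y) (D : U →ₗ[ℝ] Y)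
    (S : Submodule ℝ X) : Prop :=
  ∀ x ∈ S, ∀ u : U, C x + D u = 0 → A x + B u ∈ S

/-- `Vstar` is the largest `(A,B,C,D)`-output nulling subspace, i.e. `V*(A,B,C,D)`. -/
def IsMaxOutputNulling (A : X →ₗ[ℝ] X) (B : U →ₗ[ℝ] X) (C : X →ₗ[ℝ] Y) (D : U →ₗ[ℝ] Y)
    (Vstar : Submodule ℝ X) : Prop :=
  IsOutputNulling A B C D Vstar ∧ ∀ V, IsOutputNulling A B C D V → V ≤ Vstar

/-- `Sstar` is the smallest `(A,B,C,D)`-input containing subspace, i.e. `S*(A,B,C,D)`. -/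
def IsMinInputContaining (A : X →ₗ[ℝ] X) (B : U →ₗ[ℝ] X) (C : X →ₗ[ℝ] Y) (D : U →ₗ[ℝ] Y)
    (Sstar : Submodule ℝ X) : Prop :=
  IsInputContaining A B C D Sstar ∧ ∀ S, IsInputContaining A B C D S → Sstar ≤ S

/-- `V` is `(A,B,C,D)`-self bounded, where `Vstar` is the largest output nulling subspace:
`V` is output nulling and `V ⊇ V* ∩ B(ker D)`. -/
def IsSelfBounded (A : X →ₗ[ℝ] X) (B : U →ₗ[ℝ] X) (C : X →ₗ[ℝ] Y) (D : U →ₗ[ℝ] Y)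
    (Vstar V : Submodule ℝ X) : Prop :=
  IsOutputNulling A B C D V ∧ Vstar ⊓ (LinearMap.ker D).map B ≤ V

/-- `S` is `(A,B,C,D)`-self hidden, where `Sstar` is the smallest input containing subspace:
`S` is input containing and `S ⊆ S* + C⁻¹(im D)`. -/
def IsSelfHidden (A : X →ₗ[ℝ] X) (B : U →ₗ[ℝ] X) (C : X →ₗ[ℝ] Y) (D : U →ₗ[ℝ] Y)
    (Sstar S : Submodule ℝ X) : Prop :=
  IsInputContaining A B C D S ∧ S ≤ Sstar ⊔ (LinearMap.range D).comap C

/-- `Vm` is the smallest `(A,B,C,D)`-self bounded subspace. -/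
def IsMinSelfBounded (A : X →ₗ[ℝ] X) (B : U →ₗ[ℝ] X) (C : X →ₗ[ℝ] Y) (D : U →ₗ[ℝ] Y)
    (Vstar Vm : Submodule ℝ X) : Prop :=
  IsSelfBounded A B C D Vstar Vm ∧ ∀ V, IsSelfBounded A B C D Vstar V → Vm ≤ V

/-- `SM` is the largest `(A,B,C,D)`-self hidden subspace. -/
def IsMaxSelfHidden (A : X →ₗ[ℝ] X) (B : U →ₗ[ℝ] X) (C : X →ₗ[ℝ] Y) (D : U →ₗ[ℝ] Y)
    (Sstar SM : Submodule ℝ X) : Prop :=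
  IsSelfHidden A B C D Sstar SM ∧ ∀ S, IsSelfHidden A B C D Sstar S → S ≤ SM

end GeneralDefs

section MatrixDefs

variable {n m q p r s : ℕ}

/-- `⟨M|U⟩` : the smallest `M`-invariant subspace containing `U`. -/
def invHull (M : Matrix (Fin n) (Fin n) ℝ) (U : Submodule ℝ (Fin n → ℝ)) :
    Submodule ℝ (Fin n → ℝ) :=
  sInf {W | U ≤ W ∧ ∀ x ∈ W, M.mulVec x ∈ W}

/-- `⟨U|M⟩` : the largest `M`-invariant subspace contained in `U`. -/
def invCore (M : Matrix (Fin n) (Fin n) ℝ) (U : Submodule ℝ (Fin n → ℝ)) :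
    Submodule ℝ (Fin n → ℝ) :=
  sSup {W | W ≤ U ∧ ∀ x ∈ W, M.mulVec x ∈ W}

open scoped Classical in
/-- `σ(M | J₂/J₁)`: the multiset of complex roots (with multiplicity) of the characteristic
polynomial of the map induced by `M` on the quotient `J₂ ⧸ J₁`, for `M`-invariant `J₁ ≤ J₂`. -/
def quotSpec (M : Matrix (Fin n) (Fin n) ℝ)
    (J₁ J₂ : Submodule ℝ (Fin n → ℝ)) : Multiset ℂ :=
  if h : J₁ ≤ J₂ ∧ (∀ x ∈ J₁, M.mulVec x ∈ J₁) ∧ (∀ x ∈ J₂, M.mulVec x ∈ J₂) then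
    (((Submodule.mapQ (J₁.comap J₂.subtype) (J₁.comap J₂.subtype)
        (M.mulVecLin.restrict (p := J₂) (q := J₂) (fun x hx => h.2.2 x hx))
        (fun x hx => h.2.1 x.1 hx)).charpoly).map (algebraMap ℝ ℂ)).roots
  else 0

/-- `σ(M)`: the multiset of complex roots (with multiplicity) of the characteristic
polynomial of the square matrix `M`. -/
def specMat {ι : Type*} [Fintype ι] [DecidableEq ι] (M : Matrix ι ι ℝ) : Multiset ℂ :=
  ((M.charpoly).map (algebraMap ℝ ℂ)).roots

/-- Condition (α). -/
def CondAlpha (B : Matrix (Fin n) (Fin m) ℝ) (H : Matrix (Fin n) (Fin q) ℝ)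
    (Dz : Matrix (Fin r) (Fin m) ℝ) (Gz : Matrix (Fin r) (Fin q) ℝ)
    (V : Submodule ℝ (Fin n → ℝ)) : Prop :=
  ∀ w : Fin q → ℝ, ∃ u : Fin m → ℝ,
    H.mulVec w + B.mulVec u ∈ V ∧ Gz.mulVec w + Dz.mulVec u = 0

/-- Condition (β). -/
def CondBeta (C : Matrix (Fin p) (Fin n) ℝ) (Gy : Matrix (Fin p) (Fin q) ℝ)
    (E : Matrix (Fin r) (Fin n) ℝ) (Gz : Matrix (Fin r) (Fin q) ℝ)
    (S : Submodule ℝ (Fin n → ℝ)) : Prop :=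
  ∀ x ∈ S, ∀ w : Fin q → ℝ, C.mulVec x + Gy.mulVec w = 0 → E.mulVec x + Gz.mulVec w = 0

/-- `(S,V;K)` is a solution triple of DDPDOF. -/
def IsSolutionTriple (A : Matrix (Fin n) (Fin n) ℝ) (B : Matrix (Fin n) (Fin m) ℝ)
    (H : Matrix (Fin n) (Fin q) ℝ) (C : Matrix (Fin p) (Fin n) ℝ)
    (Dy : Matrix (Fin p) (Fin m) ℝ) (Gy : Matrix (Fin p) (Fin q) ℝ)
    (E : Matrix (Fin r) (Fin n) ℝ) (Dz : Matrix (Fin r) (Fin m) ℝ)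
    (Gz : Matrix (Fin r) (Fin q) ℝ)
    (S V : Submodule ℝ (Fin n → ℝ)) (K : Matrix (Fin m) (Fin p) ℝ) : Prop :=
  IsInputContaining A.mulVecLin H.mulVecLin C.mulVecLin Gy.mulVecLin S ∧
  IsOutputNulling A.mulVecLin B.mulVecLin E.mulVecLin Dz.mulVecLin V ∧
  CondAlpha B H Dz Gz V ∧
  CondBeta C Gy E Gz S ∧
  S ≤ V ∧
  IsUnit (1 + K * Dy) ∧
  ∀ x ∈ S, ∀ w : Fin q → ℝ,
    (A + B * K * C).mulVec x + (H + B * K * Gy).mulVec w ∈ V ∧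
    (E + Dz * K * C).mulVec x + (Gz + Dz * K * Gy).mulVec w = 0

/-- `F` is an `(A,B,E,Dz)`-output nulling friend of `V`. -/
def IsONFriend (A : Matrix (Fin n) (Fin n) ℝ) (B : Matrix (Fin n) (Fin m) ℝ)
    (E : Matrix (Fin r) (Fin n) ℝ) (Dz : Matrix (Fin r) (Fin m) ℝ)
    (V : Submodule ℝ (Fin n → ℝ)) (F : Matrix (Fin m) (Fin n) ℝ) : Prop :=
  (∀ v ∈ V, (A + B * F).mulVec v ∈ V) ∧ ∀ v ∈ V, (E + Dz * F).mulVec v = 0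

/-- `G` is an `(A,H,C,Gy)`-input containing friend of `S`. -/
def IsICFriend (A : Matrix (Fin n) (Fin n) ℝ) (H : Matrix (Fin n) (Fin q) ℝ)
    (C : Matrix (Fin p) (Fin n) ℝ) (Gy : Matrix (Fin p) (Fin q) ℝ)
    (S : Submodule ℝ (Fin n → ℝ)) (G : Matrix (Fin n) (Fin p) ℝ) : Prop :=
  (∀ x ∈ S, (A + G * C).mulVec x ∈ S) ∧ LinearMap.range (H + G * Gy).mulVecLin ≤ S

/-- `σfix(V;F)`. -/
def sigmaFixV (A : Matrix (Fin n) (Fin n) ℝ) (B : Matrix (Fin n) (Fin m) ℝ)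
    (Dz : Matrix (Fin r) (Fin m) ℝ) (V : Submodule ℝ (Fin n → ℝ))
    (F : Matrix (Fin m) (Fin n) ℝ) : Multiset ℂ :=
  quotSpec (A + B * F) (V ⊔ invHull A (LinearMap.range B.mulVecLin)) ⊤ +
  quotSpec (A + B * F)
    (invHull (A + B * F) (V ⊓ (LinearMap.ker Dz.mulVecLin).map B.mulVecLin)) V

/-- `σfix(S;G)`. -/
def sigmaFixS (A : Matrix (Fin n) (Fin n) ℝ) (C : Matrix (Fin p) (Fin n) ℝ)
    (Gy : Matrix (Fin p) (Fin q) ℝ) (S : Submodule ℝ (Fin n → ℝ))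
    (G : Matrix (Fin n) (Fin p) ℝ) : Multiset ℂ :=
  quotSpec (A + G * C) S
    (invCore (A + G * C) (S ⊔ (LinearMap.range Gy.mulVecLin).comap C.mulVecLin)) +
  quotSpec (A + G * C) ⊥ (S ⊓ invCore A (LinearMap.ker C.mulVecLin))

/-- `σfix(S,V;G,F) = σfix(V;F) ⊎ σfix(S;G)`. -/
def sigmaFix (A : Matrix (Fin n) (Fin n) ℝ) (B : Matrix (Fin n) (Fin m) ℝ)
    (C : Matrix (Fin p) (Fin n) ℝ) (Gy : Matrix (Fin p) (Fin q) ℝ)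
    (Dz : Matrix (Fin r) (Fin m) ℝ) (S V : Submodule ℝ (Fin n → ℝ))
    (G : Matrix (Fin n) (Fin p) ℝ) (F : Matrix (Fin m) (Fin n) ℝ) : Multiset ℂ :=
  sigmaFixV A B Dz V F + sigmaFixS A C Gy S G

/-- `W = (I - Dy·Dc)⁻¹`. -/
def clW (Dy : Matrix (Fin p) (Fin m) ℝ) (Dc : Matrix (Fin m) (Fin p) ℝ) :
    Matrix (Fin p) (Fin p) ℝ := (1 - Dy * Dc)⁻¹

/-- The closed-loop matrix `Â`. -/
def clA (A : Matrix (Fin n) (Fin n) ℝ) (B : Matrix (Fin n) (Fin m) ℝ)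
    (C : Matrix (Fin p) (Fin n) ℝ) (Dy : Matrix (Fin p) (Fin m) ℝ)
    (Ac : Matrix (Fin s) (Fin s) ℝ) (Bc : Matrix (Fin s) (Fin p) ℝ)
    (Cc : Matrix (Fin m) (Fin s) ℝ) (Dc : Matrix (Fin m) (Fin p) ℝ) :
    Matrix (Fin n ⊕ Fin s) (Fin n ⊕ Fin s) ℝ :=
  Matrix.fromBlocks (A + B * Dc * clW Dy Dc * C) (B * Cc + B * Dc * clW Dy Dc * Dy * Cc)
    (Bc * clW Dy Dc * C) (Ac + Bc * clW Dy Dc * Dy * Cc)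

/-- The closed-loop matrix `Ĥ`. -/
def clH (B : Matrix (Fin n) (Fin m) ℝ) (H : Matrix (Fin n) (Fin q) ℝ)
    (Dy : Matrix (Fin p) (Fin m) ℝ) (Gy : Matrix (Fin p) (Fin q) ℝ)
    (Bc : Matrix (Fin s) (Fin p) ℝ) (Dc : Matrix (Fin m) (Fin p) ℝ) :
    Matrix (Fin n ⊕ Fin s) (Fin q) ℝ :=
  Matrix.fromRows (H + B * Dc * clW Dy Dc * Gy) (Bc * clW Dy Dc * Gy)

/-- The closed-loop matrix `Ĉ`. -/
def clC (C : Matrix (Fin p) (Fin n) ℝ) (Dy : Matrix (Fin p) (Fin m) ℝ)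
    (E : Matrix (Fin r) (Fin n) ℝ) (Dz : Matrix (Fin r) (Fin m) ℝ)
    (Cc : Matrix (Fin m) (Fin s) ℝ) (Dc : Matrix (Fin m) (Fin p) ℝ) :
    Matrix (Fin r) (Fin n ⊕ Fin s) ℝ :=
  Matrix.fromCols (E + Dz * Dc * clW Dy Dc * C) (Dz * Cc + Dz * Dc * clW Dy Dc * Dy * Cc)

/-- The closed-loop matrix `Ĝ`. -/
def clG (Dy : Matrix (Fin p) (Fin m) ℝ) (Gy : Matrix (Fin p) (Fin q) ℝ)
    (Dz : Matrix (Fin r) (Fin m) ℝ) (Gz : Matrix (Fin r) (Fin q) ℝ)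
    (Dc : Matrix (Fin m) (Fin p) ℝ) : Matrix (Fin r) (Fin q) ℝ :=
  Gz + Dz * Dc * clW Dy Dc * Gy

/-- DDPDOF is solvable. -/
def DDPDOFSolvable (A : Matrix (Fin n) (Fin n) ℝ) (B : Matrix (Fin n) (Fin m) ℝ)
    (H : Matrix (Fin n) (Fin q) ℝ) (C : Matrix (Fin p) (Fin n) ℝ)
    (Dy : Matrix (Fin p) (Fin m) ℝ) (Gy : Matrix (Fin p) (Fin q) ℝ)
    (E : Matrix (Fin r) (Fin n) ℝ) (Dz : Matrix (Fin r) (Fin m) ℝ)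
    (Gz : Matrix (Fin r) (Fin q) ℝ) : Prop :=
  ∃ (s : ℕ) (Ac : Matrix (Fin s) (Fin s) ℝ) (Bc : Matrix (Fin s) (Fin p) ℝ)
    (Cc : Matrix (Fin m) (Fin s) ℝ) (Dc : Matrix (Fin m) (Fin p) ℝ),
    IsUnit (1 - Dy * Dc) ∧ clG Dy Gy Dz Gz Dc = 0 ∧
    ∀ k : ℕ, clC C Dy E Dz Cc Dc * clA A B C Dy Ac Bc Cc Dc ^ k * clH B H Dy Gy Bc Dc = 0

end MatrixDefs

end
/-! Write `V₁*` and `V_m` for the largest output nulling and the smallest self bounded subspace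
of the quadruple `(A,[B H],E,[D_z G_z])`. Condition (α) gives `V₁* = V*`, so `S + V_m = R̂` yields
`S* ⊆ S ⊆ R̂ ⊆ V₁* = V*`.

Conversely, if `S* ⊆ V*`, then condition (β) and self boundedness of `V_m` give `S* ⊆ V_m`.
Every vector of `S ⊆ S_M` splits into a vector of `S*(A,H,[C;E],[G_y;G_z]) ⊆ S* ⊆ V_m` and a
vector that a disturbance input steers back into `S` with zero output, so `S + V_m` is output
nulling and `S ⊆ V₁*`. Adjoining the inputs `S ⊆ V₁*` then leaves the largest output nulling
subspace unchanged and makes self boundedness equivalent to self boundedness plus `S ⊆ ·`,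
whose smallest instance is `S + V_m`. -/

section OutputNulling

variable {X U W Y Z : Type*} [AddCommGroup X] [Module ℝ X] [AddCommGroup U] [Module ℝ U]
  [AddCommGroup W] [Module ℝ W] [AddCommGroup Y] [Module ℝ Y] [AddCommGroup Z] [Module ℝ Z]
  {A : X →ₗ[ℝ] X} {B : U →ₗ[ℝ] X} {C : X →ₗ[ℝ] Y} {D : U →ₗ[ℝ] Y}

lemma isOutputNulling_sup {V₁ V₂ : Submodule ℝ X}
    (h₁ : ∀ v ∈ V₁, ∃ u, A v + B u ∈ V₁ ⊔ V₂ ∧ C v + D u = 0)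
    (h₂ : ∀ v ∈ V₂, ∃ u, A v + B u ∈ V₁ ⊔ V₂ ∧ C v + D u = 0) :
    IsOutputNulling A B C D (V₁ ⊔ V₂) := by
  intro v hv
  obtain ⟨a, ha, b, hb, rfl⟩ := Submodule.mem_sup.mp hv
  obtain ⟨u₁, hm₁, ho₁⟩ := h₁ a ha
  obtain ⟨u₂, hm₂, ho₂⟩ := h₂ b hb
  refine ⟨u₁ + u₂, ?_, ?_⟩
  · convert add_mem hm₁ hm₂ using 1
    simp only [map_add]; abel
  · simp only [map_add]
    linear_combination (norm := module) ho₁ + ho₂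

lemma IsOutputNulling.sup {V₁ V₂ : Submodule ℝ X} (h₁ : IsOutputNulling A B C D V₁)
    (h₂ : IsOutputNulling A B C D V₂) : IsOutputNulling A B C D (V₁ ⊔ V₂) :=
  isOutputNulling_sup
    (fun v hv => (h₁ v hv).imp fun _ h => ⟨Submodule.mem_sup_left h.1, h.2⟩)
    (fun v hv => (h₂ v hv).imp fun _ h => ⟨Submodule.mem_sup_right h.1, h.2⟩)

lemma IsOutputNulling.coprod {V : Submodule ℝ X} (h : IsOutputNulling A B C D V)
    (B' : W →ₗ[ℝ] X) (D' : W →ₗ[ℝ] Y) : IsOutputNulling A (B.coprod B') C (D.coprod D') V :=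
  fun v hv =>
    let ⟨u, hm, ho⟩ := h v hv
    ⟨(u, 0), by simpa using hm, by simpa using ho⟩

lemma isOutputNulling_coprod_subtype_iff {S V : Submodule ℝ X} (hS : S ≤ V) :
    IsOutputNulling A (B.coprod S.subtype) C (D.coprod 0) V ↔ IsOutputNulling A B C D V := by
  refine ⟨fun h v hv => ?_, fun h => h.coprod _ _⟩
  obtain ⟨⟨u, s⟩, hm, ho⟩ := h v hv
  refine ⟨u, ?_, by simpa using ho⟩
  convert sub_mem hm (hS s.2) using 1
  simp only [LinearMap.coprod_apply, Submodule.subtype_apply]; abel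

lemma IsMaxOutputNulling.unique {V₁ V₂ : Submodule ℝ X} (h₁ : IsMaxOutputNulling A B C D V₁)
    (h₂ : IsMaxOutputNulling A B C D V₂) : V₁ = V₂ :=
  le_antisymm (h₂.2 _ h₁.1) (h₁.2 _ h₂.1)

lemma IsMaxOutputNulling.coprod_subtype {S Vstar : Submodule ℝ X}
    (h : IsMaxOutputNulling A B C D Vstar) (hS : S ≤ Vstar) :
    IsMaxOutputNulling A (B.coprod S.subtype) C (D.coprod 0) Vstar := by
  have hON := (isOutputNulling_coprod_subtype_iff hS).2 h.1
  refine ⟨hON, fun V hV => (le_sup_left : V ≤ V ⊔ Vstar).trans (h.2 _ ?_)⟩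
  exact (isOutputNulling_coprod_subtype_iff (hS.trans le_sup_right)).1 (hV.sup hON)

lemma IsMaxOutputNulling.le_of_compensate {Vstar V : Submodule ℝ X} {H : W →ₗ[ℝ] X}
    {G : W →ₗ[ℝ] Y} (hVstar : IsMaxOutputNulling A B C D Vstar)
    (hcomp : ∀ w, ∃ u, H w + B u ∈ Vstar ∧ G w + D u = 0)
    (hV : IsOutputNulling A (B.coprod H) C (D.coprod G) V) : V ≤ Vstar := by
  refine le_sup_left.trans (hVstar.2 _ (isOutputNulling_sup (fun v hv => ?_)
    (fun v hv => (hVstar.1 v hv).imp fun _ h => ⟨Submodule.mem_sup_right h.1, h.2⟩)))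
  obtain ⟨⟨u, w⟩, hm, ho⟩ := hV v hv
  obtain ⟨u', hm', ho'⟩ := hcomp w
  refine ⟨u - u', ?_, ?_⟩
  · convert sub_mem (Submodule.mem_sup_left hm) (Submodule.mem_sup_right hm') using 1
    simp only [LinearMap.coprod_apply, map_sub]; abel
  · simp only [LinearMap.coprod_apply, map_sub] at ho ⊢
    linear_combination (norm := module) ho - ho'

end OutputNulling

section SelfBounded

variable {X U Y : Type*} [AddCommGroup X] [Module ℝ X] [AddCommGroup U] [Module ℝ U]
  [AddCommGroup Y] [Module ℝ Y]
  {A : X →ₗ[ℝ] X} {B : U →ₗ[ℝ] X} {C : X →ₗ[ℝ] Y} {D : U →ₗ[ℝ] Y} {Vstar V : Submodule ℝ X}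

/-- The move differs from the one supplied by `V` by a vector of `V* ∩ B(ker D) ⊆ V`. -/
lemma IsSelfBounded.add_mem_of_add_mem_max (hV : IsSelfBounded A B C D Vstar V)
    (hle : V ≤ Vstar) {x : X} {u : U} (hx : x ∈ V) (hu : A x + B u ∈ Vstar)
    (ho : C x + D u = 0) : A x + B u ∈ V := by
  obtain ⟨u₀, hm₀, ho₀⟩ := hV.1 x hx
  have hdiff : B (u - u₀) ∈ V := by
    refine hV.2 (Submodule.mem_inf.2 ⟨?_, Submodule.mem_map.2 ⟨u - u₀, ?_, rfl⟩⟩)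
    · convert sub_mem hu (hle hm₀) using 1
      simp only [map_sub]; abel
    · rw [LinearMap.mem_ker, map_sub]
      linear_combination (norm := module) ho - ho₀
  convert add_mem hm₀ hdiff using 1
  simp only [map_sub]; abel

lemma IsMinSelfBounded.unique {V₁ V₂ : Submodule ℝ X} (h₁ : IsMinSelfBounded A B C D Vstar V₁)
    (h₂ : IsMinSelfBounded A B C D Vstar V₂) : V₁ = V₂ :=
  le_antisymm (h₁.2 _ h₂.1) (h₂.2 _ h₁.1)

lemma map_ker_coprod_subtype (S : Submodule ℝ X) :
    (LinearMap.ker (D.coprod (0 : S →ₗ[ℝ] Y))).map (B.coprod S.subtype)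
      = (LinearMap.ker D).map B ⊔ S := by
  have hker : LinearMap.ker (D.coprod (0 : S →ₗ[ℝ] Y)) = (LinearMap.ker D).prod ⊤ := by
    ext; simp
  rw [hker, LinearMap.map_coprod_prod, Submodule.map_subtype_top]

lemma isSelfBounded_coprod_subtype_iff {S : Submodule ℝ X} (hS : S ≤ Vstar) :
    IsSelfBounded A (B.coprod S.subtype) C (D.coprod 0) Vstar V ↔
      IsSelfBounded A B C D Vstar V ∧ S ≤ V := by
  unfold IsSelfBounded
  rw [map_ker_coprod_subtype, ← inf_sup_assoc_of_le _ hS, sup_le_iff]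
  constructor
  · rintro ⟨hON, hL, hSV⟩
    exact ⟨⟨(isOutputNulling_coprod_subtype_iff hSV).1 hON, hL⟩, hSV⟩
  · rintro ⟨⟨hON, hL⟩, hSV⟩
    exact ⟨(isOutputNulling_coprod_subtype_iff hSV).2 hON, hL, hSV⟩

lemma IsMinSelfBounded.sup_coprod_subtype {S Vm : Submodule ℝ X} (hS : S ≤ Vstar)
    (hVm : IsMinSelfBounded A B C D Vstar Vm) (hON : IsOutputNulling A B C D (S ⊔ Vm)) :
    IsMinSelfBounded A (B.coprod S.subtype) C (D.coprod 0) Vstar (S ⊔ Vm) := by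
  refine ⟨(isSelfBounded_coprod_subtype_iff hS).2
    ⟨⟨hON, hVm.1.2.trans le_sup_right⟩, le_sup_left⟩, fun V hV => ?_⟩
  obtain ⟨hV, hSV⟩ := (isSelfBounded_coprod_subtype_iff hS).1 hV
  exact sup_le hSV (hVm.2 V hV)

end SelfBounded

section Disturbance

variable {X U W Y Z : Type*} [AddCommGroup X] [Module ℝ X] [AddCommGroup U] [Module ℝ U]
  [AddCommGroup W] [Module ℝ W] [AddCommGroup Y] [Module ℝ Y] [AddCommGroup Z] [Module ℝ Z]
  {A : X →ₗ[ℝ] X} {B : U →ₗ[ℝ] X} {H : W →ₗ[ℝ] X} {C : X →ₗ[ℝ] Y} {G : W →ₗ[ℝ] Y}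
  {E : X →ₗ[ℝ] Z} {Dz : U →ₗ[ℝ] Z} {Gz : W →ₗ[ℝ] Z}

lemma IsInputContaining.prod {S : Submodule ℝ X} (hS : IsInputContaining A H C G S) :
    IsInputContaining A H (C.prod E) (G.prod Gz) S :=
  fun x hx w hw => hS x hx w (congrArg Prod.fst hw)

lemma IsMinInputContaining.le_of_isSelfBounded {Sstar Vstar V : Submodule ℝ X}
    (hSstar : IsMinInputContaining A H C G Sstar)
    (hβ : ∀ x ∈ Sstar, ∀ w, C x + G w = 0 → E x + Gz w = 0)
    (hV : IsSelfBounded A (B.coprod H) E (Dz.coprod Gz) Vstar V) (hle : V ≤ Vstar)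
    (hSstar_le : Sstar ≤ Vstar) : Sstar ≤ V := by
  refine (hSstar.2 (Sstar ⊓ V) fun x hx w hw => ⟨hSstar.1 x hx.1 w hw, ?_⟩).trans inf_le_right
  have key := hV.add_mem_of_add_mem_max hle (u := (0, w)) hx.2
    (by simpa using hSstar_le (hSstar.1 x hx.1 w hw)) (by simpa using hβ x hx.1 w hw)
  simpa using key

/-- The splitting `x = x₀ + x₁` with `x₀ ∈ S₀ ⊆ V` and `[C;E] x₁ = [G;G_z] a`: steer `x₀` inside
`V`, and `x₁` back into `S` with the disturbance `-a`, which also cancels its output `E x₁`. -/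
lemma isOutputNulling_sup_of_le_sup_comap {S S₀ V : Submodule ℝ X}
    (hS : IsInputContaining A H (C.prod E) (G.prod Gz) S)
    (hsplit : S ≤ S₀ ⊔ (LinearMap.range (G.prod Gz)).comap (C.prod E))
    (hS₀S : S₀ ≤ S) (hS₀V : S₀ ≤ V) (hV : IsOutputNulling A (B.coprod H) E (Dz.coprod Gz) V) :
    IsOutputNulling A (B.coprod H) E (Dz.coprod Gz) (S ⊔ V) := by
  refine isOutputNulling_sup (fun x hx => ?_)
    (fun v hv => (hV v hv).imp fun _ h => ⟨Submodule.mem_sup_right h.1, h.2⟩)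
  obtain ⟨x₀, hx₀, x₁, ⟨a, ha⟩, rfl⟩ := Submodule.mem_sup.mp (hsplit hx)
  obtain ⟨⟨u₀, w₀⟩, hm₀, ho₀⟩ := hV x₀ (hS₀V hx₀)
  have hx₁ : x₁ ∈ S := by simpa using sub_mem hx (hS₀S hx₀)
  have hm₁ : A x₁ + H (-a) ∈ S := hS x₁ hx₁ (-a) (by rw [map_neg, ha, add_neg_cancel])
  have hEa : Gz a = E x₁ := congrArg Prod.snd ha
  refine ⟨(u₀, w₀ + -a), ?_, ?_⟩
  · convert add_mem (Submodule.mem_sup_right hm₀) (Submodule.mem_sup_left hm₁) using 1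
    simp only [LinearMap.coprod_apply, map_add, map_neg]; abel
  · simp only [LinearMap.coprod_apply, map_add, map_neg] at ho₀ ⊢
    linear_combination (norm := module) ho₀ - hEa

end Disturbance

theorem stmt8_general {n m q p r : ℕ}
    (A : Matrix (Fin n) (Fin n) ℝ) (B : Matrix (Fin n) (Fin m) ℝ)
    (H : Matrix (Fin n) (Fin q) ℝ) (C : Matrix (Fin p) (Fin n) ℝ)
    (Gy : Matrix (Fin p) (Fin q) ℝ)
    (E : Matrix (Fin r) (Fin n) ℝ) (Dz : Matrix (Fin r) (Fin m) ℝ)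
    (Gz : Matrix (Fin r) (Fin q) ℝ)
    (Vstar : Submodule ℝ (Fin n → ℝ))
    (hVstar : IsMaxOutputNulling A.mulVecLin B.mulVecLin E.mulVecLin Dz.mulVecLin Vstar)
    (Sstar : Submodule ℝ (Fin n → ℝ))
    (hSstar : IsMinInputContaining A.mulVecLin H.mulVecLin C.mulVecLin Gy.mulVecLin Sstar)
    (Vstar1 : Submodule ℝ (Fin n → ℝ))
    (hVstar1 : IsMaxOutputNulling A.mulVecLin (B.mulVecLin.coprod H.mulVecLin) E.mulVecLin
      (Dz.mulVecLin.coprod Gz.mulVecLin) Vstar1)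
    (Vm : Submodule ℝ (Fin n → ℝ))
    (hVm : IsMinSelfBounded A.mulVecLin (B.mulVecLin.coprod H.mulVecLin) E.mulVecLin
      (Dz.mulVecLin.coprod Gz.mulVecLin) Vstar1 Vm)
    (Sstar2 : Submodule ℝ (Fin n → ℝ))
    (hSstar2 : IsMinInputContaining A.mulVecLin H.mulVecLin (C.mulVecLin.prod E.mulVecLin)
      (Gy.mulVecLin.prod Gz.mulVecLin) Sstar2)
    (SM : Submodule ℝ (Fin n → ℝ))
    (hSM : IsMaxSelfHidden A.mulVecLin H.mulVecLin (C.mulVecLin.prod E.mulVecLin)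
      (Gy.mulVecLin.prod Gz.mulVecLin) Sstar2 SM)
    (hα : CondAlpha B H Dz Gz Vstar)
    (hβ : CondBeta C Gy E Gz Sstar)
    (S : Submodule ℝ (Fin n → ℝ))
    (hS : IsInputContaining A.mulVecLin H.mulVecLin C.mulVecLin Gy.mulVecLin S)
    (hS2 : S ≤ SM)
    (VstarHat : Submodule ℝ (Fin n → ℝ))
    (hVstarHat : IsMaxOutputNulling A.mulVecLin
      ((B.mulVecLin.coprod H.mulVecLin).coprod S.subtype) E.mulVecLin
      ((Dz.mulVecLin.coprod Gz.mulVecLin).coprod (0 : ↥S →ₗ[ℝ] (Fin r → ℝ))) VstarHat)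
    (Rhat : Submodule ℝ (Fin n → ℝ))
    (hRhat : IsMinSelfBounded A.mulVecLin
      ((B.mulVecLin.coprod H.mulVecLin).coprod S.subtype) E.mulVecLin
      ((Dz.mulVecLin.coprod Gz.mulVecLin).coprod (0 : ↥S →ₗ[ℝ] (Fin r → ℝ))) VstarHat Rhat) :
    Sstar ≤ Vstar ↔ S ⊔ Vm = Rhat := by
  have hSstarS : Sstar ≤ S := hSstar.2 S hS
  constructor
  · intro hSstarV
    have hVmV₁ : Vm ≤ Vstar1 := hVstar1.2 Vm hVm.1.1
    have hVV₁ : Vstar ≤ Vstar1 := hVstar1.2 _ (hVstar.1.coprod _ _)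
    have hSstarVm : Sstar ≤ Vm := hSstar.le_of_isSelfBounded (E := E.mulVecLin)
      (Gz := Gz.mulVecLin) hβ hVm.1 hVmV₁ (hSstarV.trans hVV₁)
    have hSstar2_le : Sstar2 ≤ Sstar := hSstar2.2 Sstar hSstar.1.prod
    have hON : IsOutputNulling A.mulVecLin (B.mulVecLin.coprod H.mulVecLin) E.mulVecLin
        (Dz.mulVecLin.coprod Gz.mulVecLin) (S ⊔ Vm) :=
      isOutputNulling_sup_of_le_sup_comap hS.prod (hS2.trans hSM.1.2) (hSstar2_le.trans hSstarS)
        (hSstar2_le.trans hSstarVm) hVm.1.1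
    have hSV₁ : S ≤ Vstar1 := le_sup_left.trans (hVstar1.2 _ hON)
    rw [hVstarHat.unique (hVstar1.coprod_subtype hSV₁)] at hRhat
    exact (hVm.sup_coprod_subtype hSV₁ hON).unique hRhat
  · intro hR
    have hSR : S ≤ Rhat := hR ▸ le_sup_left
    have hRV₁ : Rhat ≤ Vstar1 :=
      hVstar1.2 _ ((isOutputNulling_coprod_subtype_iff hSR).1 hRhat.1.1)
    have hV₁V : Vstar1 ≤ Vstar :=
      hVstar.le_of_compensate (H := H.mulVecLin) (G := Gz.mulVecLin) hα hVstar1.1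
    exact hSstarS.trans (hSR.trans (hRV₁.trans hV₁V))

theorem stmt8 {n m q p r : ℕ}
    (A : Matrix (Fin n) (Fin n) ℝ) (B : Matrix (Fin n) (Fin m) ℝ)
    (H : Matrix (Fin n) (Fin q) ℝ) (C : Matrix (Fin p) (Fin n) ℝ)
    (Gy : Matrix (Fin p) (Fin q) ℝ)
    (E : Matrix (Fin r) (Fin n) ℝ) (Dz : Matrix (Fin r) (Fin m) ℝ)
    (Gz : Matrix (Fin r) (Fin q) ℝ)
    (Vstar : Submodule ℝ (Fin n → ℝ))
    (hVstar : IsMaxOutputNulling A.mulVecLin B.mulVecLin E.mulVecLin Dz.mulVecLin Vstar)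
    (Sstar : Submodule ℝ (Fin n → ℝ))
    (hSstar : IsMinInputContaining A.mulVecLin H.mulVecLin C.mulVecLin Gy.mulVecLin Sstar)
    (Vstar1 : Submodule ℝ (Fin n → ℝ))
    (hVstar1 : IsMaxOutputNulling A.mulVecLin (B.mulVecLin.coprod H.mulVecLin) E.mulVecLin
      (Dz.mulVecLin.coprod Gz.mulVecLin) Vstar1)
    (Vm : Submodule ℝ (Fin n → ℝ))
    (hVm : IsMinSelfBounded A.mulVecLin (B.mulVecLin.coprod H.mulVecLin) E.mulVecLin
      (Dz.mulVecLin.coprod Gz.mulVecLin) Vstar1 Vm)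
    (Sstar2 : Submodule ℝ (Fin n → ℝ))
    (hSstar2 : IsMinInputContaining A.mulVecLin H.mulVecLin (C.mulVecLin.prod E.mulVecLin)
      (Gy.mulVecLin.prod Gz.mulVecLin) Sstar2)
    (SM : Submodule ℝ (Fin n → ℝ))
    (hSM : IsMaxSelfHidden A.mulVecLin H.mulVecLin (C.mulVecLin.prod E.mulVecLin)
      (Gy.mulVecLin.prod Gz.mulVecLin) Sstar2 SM)
    (hα : CondAlpha B H Dz Gz Vstar)
    (hβ : CondBeta C Gy E Gz Sstar)
    (S : Submodule ℝ (Fin n → ℝ))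
    (hS : IsInputContaining A.mulVecLin H.mulVecLin C.mulVecLin Gy.mulVecLin S)
    (hS1 : Vm ⊓ SM ≤ S) (hS2 : S ≤ SM)
    (VstarHat : Submodule ℝ (Fin n → ℝ))
    (hVstarHat : IsMaxOutputNulling A.mulVecLin
      ((B.mulVecLin.coprod H.mulVecLin).coprod S.subtype) E.mulVecLin
      ((Dz.mulVecLin.coprod Gz.mulVecLin).coprod (0 : ↥S →ₗ[ℝ] (Fin r → ℝ))) VstarHat)
    (Rhat : Submodule ℝ (Fin n → ℝ))
    (hRhat : IsMinSelfBounded A.mulVecLin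
      ((B.mulVecLin.coprod H.mulVecLin).coprod S.subtype) E.mulVecLin
      ((Dz.mulVecLin.coprod Gz.mulVecLin).coprod (0 : ↥S →ₗ[ℝ] (Fin r → ℝ))) VstarHat Rhat) :
    Sstar ≤ Vstar ↔ S ⊔ Vm = Rhat :=
  stmt8_general A B H C Gy E Dz Gz Vstar hVstar Sstar hSstar Vstar1 hVstar1 Vm hVm Sstar2 hSstar2 SM
    hSM hα hβ S hS hS2 VstarHat hVstarHat Rhat hRhat
end

section
/- Let S be an (A,H,C,G_y)-self hidden subspace, let V be an (A,B,E,D_z)-self bounded subspace, and let (S,V;K) be a solution triple. Then for every (A,H,C,G_y)-self hidden subspace S̄ and every (A,B,E,D_z)-self bounded subspace V̄ satisfying: (i) for every w ∈ ℝ^q there exists u ∈ ℝ^m with Hw + Bu ∈ V̄ and G_z w + D_z u = 0; (ii) for every x ∈ S̄ and w ∈ ℝ^q with Cx + G_y w = 0 one has Ex + G_z w = 0; (iii) S̄ ⊆ V̄; the triple (S̄,V̄;K) is also a solution triple. -/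
/-!
Both the closed-loop state and output are linear in `(x, w)`. A vector of a self hidden `S̄`
splits as `s + v` with `s ∈ S* ⊆ S` and `C v + G_y w₀ = 0` for some `w₀`. On `(v, w₀)` the
feedback contributes nothing, so input containment of `S̄ ⊆ V̄` and condition (ii) finish. On
`(s, w - w₀)` the triple `(S, V; K)` gives a state in `V ⊆ V*` with zero output; subtracting
motions that stay in `V̄` (output nulling of `V̄` from `s ∈ S* ⊆ S̄ ⊆ V̄`, condition (i) for the
disturbance) leaves `B u` with `D_z u = 0` inside `V*`, which self boundedness puts in `V̄`.
-/

section ClosedLoop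

variable {X U W Y X' : Type*} [AddCommGroup X] [Module ℝ X] [AddCommGroup U] [Module ℝ U]
  [AddCommGroup W] [Module ℝ W] [AddCommGroup Y] [Module ℝ Y] [AddCommGroup X'] [Module ℝ X']

/-- The next state (for `P, R, Q = A, H, B`) or the output (for `P, R, Q = E, G_z, D_z`) under the
static feedback `u = K (C x + G w)`. -/
def closedLoop (P : X →ₗ[ℝ] X') (R : W →ₗ[ℝ] X') (Q : U →ₗ[ℝ] X') (K : Y →ₗ[ℝ] U)
    (C : X →ₗ[ℝ] Y) (G : W →ₗ[ℝ] Y) : X × W →ₗ[ℝ] X' :=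
  P.coprod R + Q ∘ₗ K ∘ₗ C.coprod G

variable {P : X →ₗ[ℝ] X'} {R : W →ₗ[ℝ] X'} {Q : U →ₗ[ℝ] X'} {K : Y →ₗ[ℝ] U}
  {C : X →ₗ[ℝ] Y} {G : W →ₗ[ℝ] Y}

theorem closedLoop_apply (x : X) (w : W) :
    closedLoop P R Q K C G (x, w) = P x + R w + Q (K (C x + G w)) :=
  rfl

theorem closedLoop_apply_of_eq_zero {x : X} {w : W} (h : C x + G w = 0) :
    closedLoop P R Q K C G (x, w) = P x + R w := by
  rw [closedLoop_apply, h, map_zero, map_zero, add_zero]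

end ClosedLoop

theorem Matrix.mulVec_add_mulVec_eq_closedLoop {n m q p r : ℕ}
    (P : Matrix (Fin r) (Fin n) ℝ) (R : Matrix (Fin r) (Fin q) ℝ) (Q : Matrix (Fin r) (Fin m) ℝ)
    (K : Matrix (Fin m) (Fin p) ℝ) (C : Matrix (Fin p) (Fin n) ℝ) (G : Matrix (Fin p) (Fin q) ℝ)
    (x : Fin n → ℝ) (w : Fin q → ℝ) :
    (P + Q * K * C).mulVec x + (R + Q * K * G).mulVec w =
      closedLoop P.mulVecLin R.mulVecLin Q.mulVecLin K.mulVecLin C.mulVecLin G.mulVecLin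
        (x, w) := by
  simp only [closedLoop_apply, Matrix.mulVecLin_apply, Matrix.add_mulVec, Matrix.mulVec_add,
    ← Matrix.mulVec_mulVec]
  abel

section Invariance

variable {X U W Y Z : Type*} [AddCommGroup X] [Module ℝ X] [AddCommGroup U] [Module ℝ U]
  [AddCommGroup W] [Module ℝ W] [AddCommGroup Y] [Module ℝ Y] [AddCommGroup Z] [Module ℝ Z]
  {A : X →ₗ[ℝ] X} {B : U →ₗ[ℝ] X} {H : W →ₗ[ℝ] X} {C : X →ₗ[ℝ] Y} {Gy : W →ₗ[ℝ] Y}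
  {E : X →ₗ[ℝ] Z} {Dz : U →ₗ[ℝ] Z} {Gz : W →ₗ[ℝ] Z} {K : Y →ₗ[ℝ] U}
  {Vstar Sstar S V Sb Vb : Submodule ℝ X}

theorem IsSelfBounded.add_mem_of_mem_maxOutputNulling
    (hVstar : IsMaxOutputNulling A B E Dz Vstar) (hV : IsSelfBounded A B E Dz Vstar V)
    {v : X} {u : U} (hv : v ∈ V) (hu : Dz u = 0) (h : v + B u ∈ Vstar) : v + B u ∈ V := by
  have hBu : B u ∈ Vstar := by
    simpa using Vstar.sub_mem h (hVstar.2 V hV.1 hv)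
  exact V.add_mem hv (hV.2 ⟨hBu, u, hu, rfl⟩)

theorem IsSelfBounded.add_add_mem_of_mem_maxOutputNulling
    (hVstar : IsMaxOutputNulling A B E Dz Vstar) (hV : IsSelfBounded A B E Dz Vstar V)
    (hH : ∀ w, ∃ u, H w + B u ∈ V ∧ Gz w + Dz u = 0)
    {x : X} {w : W} {u : U} (hx : x ∈ V) (hmem : A x + H w + B u ∈ Vstar)
    (hzero : E x + Gz w + Dz u = 0) : A x + H w + B u ∈ V := by
  obtain ⟨ux, hux, hzx⟩ := hV.1 x hx
  obtain ⟨uw, huw, hzw⟩ := hH w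
  have hsplit : A x + H w + B u = ((A x + B ux) + (H w + B uw)) + B (u - uw - ux) := by
    simp only [map_sub]
    abel
  have hker : Dz (u - uw - ux) = 0 := by
    simp only [map_sub]
    linear_combination (norm := module) hzero - hzw - hzx
  rw [hsplit] at hmem ⊢
  exact hV.add_mem_of_mem_maxOutputNulling hVstar (V.add_mem hux huw) hker hmem

theorem IsSelfHidden.exists_add (hSstar : IsMinInputContaining A H C Gy Sstar)
    (hS : IsSelfHidden A H C Gy Sstar S) {x : X} (hx : x ∈ S) :
    ∃ s ∈ Sstar, ∃ v ∈ S, ∃ w, C v + Gy w = 0 ∧ x = s + v := by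
  obtain ⟨s, hs, v, hv, rfl⟩ := Submodule.mem_sup.mp (hS.2 hx)
  obtain ⟨w, hw⟩ := hv
  refine ⟨s, hs, v, ?_, -w, by rw [map_neg, hw, add_neg_cancel], rfl⟩
  simpa using S.sub_mem hx (hSstar.2 S hS.1 hs)

theorem closedLoop_mem_and_eq_zero_of_isSelfHidden_of_isSelfBounded
    (hVstar : IsMaxOutputNulling A B E Dz Vstar) (hSstar : IsMinInputContaining A H C Gy Sstar)
    (hV : IsOutputNulling A B E Dz V) (hS : IsInputContaining A H C Gy S)
    (hK : ∀ x ∈ S, ∀ w,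
      closedLoop A H B K C Gy (x, w) ∈ V ∧ closedLoop E Gz Dz K C Gy (x, w) = 0)
    (hSb : IsSelfHidden A H C Gy Sstar Sb) (hVb : IsSelfBounded A B E Dz Vstar Vb)
    (hα : ∀ w, ∃ u, H w + B u ∈ Vb ∧ Gz w + Dz u = 0)
    (hβ : ∀ x ∈ Sb, ∀ w, C x + Gy w = 0 → E x + Gz w = 0) (hSbVb : Sb ≤ Vb)
    {x : X} (hx : x ∈ Sb) (w : W) :
    closedLoop A H B K C Gy (x, w) ∈ Vb ∧ closedLoop E Gz Dz K C Gy (x, w) = 0 := by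
  obtain ⟨s, hs, v, hv, w₀, hvw₀, rfl⟩ := hSb.exists_add hSstar hx
  have hsplit : (s + v, w) = (s, w - w₀) + (v, w₀) := by simp
  obtain ⟨hsV, hsz⟩ := hK s (hSstar.2 S hS hs) (w - w₀)
  rw [hsplit, map_add, map_add, closedLoop_apply_of_eq_zero hvw₀,
    closedLoop_apply_of_eq_zero hvw₀, hsz, hβ v hv w₀ hvw₀, add_zero]
  refine ⟨Vb.add_mem ?_ (hSbVb (hSb.1 v hv w₀ hvw₀)), rfl⟩
  rw [closedLoop_apply] at hsV hsz ⊢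
  exact hVb.add_add_mem_of_mem_maxOutputNulling hVstar hα (hSbVb (hSstar.2 Sb hSb.1 hs))
    (hVstar.2 V hV hsV) hsz

end Invariance

theorem stmt13_general {n m q p r : ℕ}
    (A : Matrix (Fin n) (Fin n) ℝ) (B : Matrix (Fin n) (Fin m) ℝ)
    (H : Matrix (Fin n) (Fin q) ℝ) (C : Matrix (Fin p) (Fin n) ℝ)
    (Dy : Matrix (Fin p) (Fin m) ℝ) (Gy : Matrix (Fin p) (Fin q) ℝ)
    (E : Matrix (Fin r) (Fin n) ℝ) (Dz : Matrix (Fin r) (Fin m) ℝ)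
    (Gz : Matrix (Fin r) (Fin q) ℝ)
    (Vstar : Submodule ℝ (Fin n → ℝ))
    (hVstar : IsMaxOutputNulling A.mulVecLin B.mulVecLin E.mulVecLin Dz.mulVecLin Vstar)
    (Sstar : Submodule ℝ (Fin n → ℝ))
    (hSstar : IsMinInputContaining A.mulVecLin H.mulVecLin C.mulVecLin Gy.mulVecLin Sstar)
    (S V : Submodule ℝ (Fin n → ℝ)) (K : Matrix (Fin m) (Fin p) ℝ)
    (hTriple : IsSolutionTriple A B H C Dy Gy E Dz Gz S V K) :
    ∀ Sb Vb : Submodule ℝ (Fin n → ℝ),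
      IsSelfHidden A.mulVecLin H.mulVecLin C.mulVecLin Gy.mulVecLin Sstar Sb →
      IsSelfBounded A.mulVecLin B.mulVecLin E.mulVecLin Dz.mulVecLin Vstar Vb →
      CondAlpha B H Dz Gz Vb → CondBeta C Gy E Gz Sb → Sb ≤ Vb →
      IsSolutionTriple A B H C Dy Gy E Dz Gz Sb Vb K := by
  intro Sb Vb hSb hVb hα hβ hSbVb
  obtain ⟨hS, hV, -, -, -, hunit, hK⟩ := hTriple
  refine ⟨hSb.1, hVb.1, hα, hβ, hSbVb, hunit, fun x hx w => ?_⟩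
  simp only [Matrix.mulVec_add_mulVec_eq_closedLoop] at hK ⊢
  exact closedLoop_mem_and_eq_zero_of_isSelfHidden_of_isSelfBounded hVstar hSstar hV hS hK
    hSb hVb hα hβ hSbVb hx w

theorem stmt13 {n m q p r : ℕ}
    (A : Matrix (Fin n) (Fin n) ℝ) (B : Matrix (Fin n) (Fin m) ℝ)
    (H : Matrix (Fin n) (Fin q) ℝ) (C : Matrix (Fin p) (Fin n) ℝ)
    (Dy : Matrix (Fin p) (Fin m) ℝ) (Gy : Matrix (Fin p) (Fin q) ℝ)
    (E : Matrix (Fin r) (Fin n) ℝ) (Dz : Matrix (Fin r) (Fin m) ℝ)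
    (Gz : Matrix (Fin r) (Fin q) ℝ)
    (Vstar : Submodule ℝ (Fin n → ℝ))
    (hVstar : IsMaxOutputNulling A.mulVecLin B.mulVecLin E.mulVecLin Dz.mulVecLin Vstar)
    (Sstar : Submodule ℝ (Fin n → ℝ))
    (hSstar : IsMinInputContaining A.mulVecLin H.mulVecLin C.mulVecLin Gy.mulVecLin Sstar)
    (S V : Submodule ℝ (Fin n → ℝ)) (K : Matrix (Fin m) (Fin p) ℝ)
    (hSh : IsSelfHidden A.mulVecLin H.mulVecLin C.mulVecLin Gy.mulVecLin Sstar S)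
    (hVb : IsSelfBounded A.mulVecLin B.mulVecLin E.mulVecLin Dz.mulVecLin Vstar V)
    (hTriple : IsSolutionTriple A B H C Dy Gy E Dz Gz S V K) :
    ∀ Sb Vb : Submodule ℝ (Fin n → ℝ),
      IsSelfHidden A.mulVecLin H.mulVecLin C.mulVecLin Gy.mulVecLin Sstar Sb →
      IsSelfBounded A.mulVecLin B.mulVecLin E.mulVecLin Dz.mulVecLin Vstar Vb →
      CondAlpha B H Dz Gz Vb → CondBeta C Gy E Gz Sb → Sb ≤ Vb →
      IsSolutionTriple A B H C Dy Gy E Dz Gz Sb Vb K :=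
  stmt13_general A B H C Dy Gy E Dz Gz Vstar hVstar Sstar hSstar S V K hTriple
end

section
/- Assume DDPDOF is solvable. Then for every matrix K ∈ ℝ^{m×p} the following are equivalent: (1) there exist an (A,H,C,G_y)-self hidden subspace S and an (A,B,E,D_z)-self bounded subspace V such that (S,V;K) is a solution triple; (2) (S*(A,H,C,G_y), V*(A,B,E,D_z); K) is a solution triple. -/
section GeneralSubspaces

variable {X U Y : Type*} [AddCommGroup X] [Module ℝ X] [AddCommGroup U] [Module ℝ U]
  [AddCommGroup Y] [Module ℝ Y] {A : X →ₗ[ℝ] X} {B : U →ₗ[ℝ] X} {C : X →ₗ[ℝ] Y}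
  {D : U →ₗ[ℝ] Y}

theorem IsMinInputContaining.isSelfHidden {Sstar : Submodule ℝ X}
    (h : IsMinInputContaining A B C D Sstar) : IsSelfHidden A B C D Sstar Sstar :=
  ⟨h.1, le_sup_left⟩

theorem IsMaxOutputNulling.isSelfBounded {Vstar : Submodule ℝ X}
    (h : IsMaxOutputNulling A B C D Vstar) : IsSelfBounded A B C D Vstar Vstar :=
  ⟨h.1, inf_le_left⟩

end GeneralSubspaces

section SolutionTriple

variable {n m q p r : ℕ} {A : Matrix (Fin n) (Fin n) ℝ} {B : Matrix (Fin n) (Fin m) ℝ}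
  {H : Matrix (Fin n) (Fin q) ℝ} {C : Matrix (Fin p) (Fin n) ℝ} {Dy : Matrix (Fin p) (Fin m) ℝ}
  {Gy : Matrix (Fin p) (Fin q) ℝ} {E : Matrix (Fin r) (Fin n) ℝ} {Dz : Matrix (Fin r) (Fin m) ℝ}
  {Gz : Matrix (Fin r) (Fin q) ℝ} {K : Matrix (Fin m) (Fin p) ℝ}

theorem IsSolutionTriple.mono {S V S' V' : Submodule ℝ (Fin n → ℝ)}
    (h : IsSolutionTriple A B H C Dy Gy E Dz Gz S V K)
    (hS' : IsInputContaining A.mulVecLin H.mulVecLin C.mulVecLin Gy.mulVecLin S')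
    (hV' : IsOutputNulling A.mulVecLin B.mulVecLin E.mulVecLin Dz.mulVecLin V')
    (hS'S : S' ≤ S) (hVV' : V ≤ V') :
    IsSolutionTriple A B H C Dy Gy E Dz Gz S' V' K := by
  obtain ⟨-, -, hα, hβ, hSV, hK, hfeedback⟩ := h
  refine ⟨hS', hV', fun w => ?_, fun x hx => hβ x (hS'S hx), hS'S.trans (hSV.trans hVV'), hK,
    fun x hx w => ?_⟩
  · obtain ⟨u, hu, hz⟩ := hα w
    exact ⟨u, hVV' hu, hz⟩
  · obtain ⟨hx', hz⟩ := hfeedback x (hS'S hx) w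
    exact ⟨hVV' hx', hz⟩

end SolutionTriple

theorem stmt14_general {n m q p r : ℕ}
    (A : Matrix (Fin n) (Fin n) ℝ) (B : Matrix (Fin n) (Fin m) ℝ)
    (H : Matrix (Fin n) (Fin q) ℝ) (C : Matrix (Fin p) (Fin n) ℝ)
    (Dy : Matrix (Fin p) (Fin m) ℝ) (Gy : Matrix (Fin p) (Fin q) ℝ)
    (E : Matrix (Fin r) (Fin n) ℝ) (Dz : Matrix (Fin r) (Fin m) ℝ)
    (Gz : Matrix (Fin r) (Fin q) ℝ)
    (Vstar : Submodule ℝ (Fin n → ℝ))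
    (hVstar : IsMaxOutputNulling A.mulVecLin B.mulVecLin E.mulVecLin Dz.mulVecLin Vstar)
    (Sstar : Submodule ℝ (Fin n → ℝ))
    (hSstar : IsMinInputContaining A.mulVecLin H.mulVecLin C.mulVecLin Gy.mulVecLin Sstar) :
    ∀ K : Matrix (Fin m) (Fin p) ℝ,
      (∃ S V : Submodule ℝ (Fin n → ℝ),
        IsSelfHidden A.mulVecLin H.mulVecLin C.mulVecLin Gy.mulVecLin Sstar S ∧
        IsSelfBounded A.mulVecLin B.mulVecLin E.mulVecLin Dz.mulVecLin Vstar V ∧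
        IsSolutionTriple A B H C Dy Gy E Dz Gz S V K) ↔
      IsSolutionTriple A B H C Dy Gy E Dz Gz Sstar Vstar K := by
  intro K
  constructor
  · rintro ⟨S, V, ⟨hS, -⟩, ⟨hV, -⟩, htriple⟩
    exact htriple.mono hSstar.1 hVstar.1 (hSstar.2 S hS) (hVstar.2 V hV)
  · intro htriple
    exact ⟨Sstar, Vstar, hSstar.isSelfHidden, hVstar.isSelfBounded, htriple⟩

theorem stmt14 {n m q p r : ℕ}
    (A : Matrix (Fin n) (Fin n) ℝ) (B : Matrix (Fin n) (Fin m) ℝ)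
    (H : Matrix (Fin n) (Fin q) ℝ) (C : Matrix (Fin p) (Fin n) ℝ)
    (Dy : Matrix (Fin p) (Fin m) ℝ) (Gy : Matrix (Fin p) (Fin q) ℝ)
    (E : Matrix (Fin r) (Fin n) ℝ) (Dz : Matrix (Fin r) (Fin m) ℝ)
    (Gz : Matrix (Fin r) (Fin q) ℝ)
    (Vstar : Submodule ℝ (Fin n → ℝ))
    (hVstar : IsMaxOutputNulling A.mulVecLin B.mulVecLin E.mulVecLin Dz.mulVecLin Vstar)
    (Sstar : Submodule ℝ (Fin n → ℝ))
    (hSstar : IsMinInputContaining A.mulVecLin H.mulVecLin C.mulVecLin Gy.mulVecLin Sstar)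
    (hsolv : DDPDOFSolvable A B H C Dy Gy E Dz Gz) :
    ∀ K : Matrix (Fin m) (Fin p) ℝ,
      (∃ S V : Submodule ℝ (Fin n → ℝ),
        IsSelfHidden A.mulVecLin H.mulVecLin C.mulVecLin Gy.mulVecLin Sstar S ∧
        IsSelfBounded A.mulVecLin B.mulVecLin E.mulVecLin Dz.mulVecLin Vstar V ∧
        IsSolutionTriple A B H C Dy Gy E Dz Gz S V K) ↔
      IsSolutionTriple A B H C Dy Gy E Dz Gz Sstar Vstar K :=
  stmt14_general A B H C Dy Gy E Dz Gz Vstar hVstar Sstar hSstar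
end
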